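/- arXiv:math/0505663 — 2 statements merged into one kernel-verified Lean document; each statement's English description precedes it below -/
import Mathlib

section
/- Let k be a field, V a finite-dimensional k-vector space, π : V* → V a skew-symmetric linear map, and ψ an alternating trilinear form on V. If ψ(π α, π β, π γ) = 0 for all α, β, γ ∈ V* (i.e., (∧³π♯)ψ = 0), then for every α ∈ V* the endomorphism Ψ_α of V* satisfies Ψ_α ∘ Ψ_α = 0; consequently Tr(Ψ_α) = 0 for every α, and the vector π ξ vanishes, where ξ ∈ V* is defined by ξ(X) = Σ_i ψ(π ε^i, e_i, X) for any basis (e_i) with dual basis (ε^i). (This is the claim of the paper's Example 1 that (∧³π♯)ψ = 0 implies Y_{π,ψ} = 0.) -/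
/-!
Since `ψ` vanishes on `π(V*)³`, every form `ψ(π α, π β, ·)` annihilates the range of `π`, and by
skew-symmetry a form annihilating the range of `π` lies in its kernel. Hence `π ∘ Ψ_α = 0`, so
`Ψ_α ∘ Ψ_α = ψ(π α, ·) ∘ (π ∘ Ψ_α) = 0` and `Ψ_α` has trace zero. By cyclicity of `ψ`,
`ξ(π α) = Σ_i ψ(π α, π εⁱ, e_i) = Tr Ψ_α = 0`, so `ξ` annihilates the range of `π` as well and
`π ξ = 0`.
-/

/-- The linear form `ξ(X) = Σ_i ψ(π εⁱ, e_i, X)` associated to a basis `(e_i)` with dual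
basis `(εⁱ)`; it is the contraction `i_π ψ` (up to normalization). -/
noncomputable def xiForm {k V ι : Type*} [Field k] [AddCommGroup V] [Module k V] [Fintype ι]
    (π : Module.Dual k V →ₗ[k] V) (ψ : V →ₗ[k] V →ₗ[k] V →ₗ[k] k)
    (b : Module.Basis ι k V) : Module.Dual k V :=
  ∑ i, ψ (π (b.coord i)) (b i)

/-- The endomorphism `Ψ_α` of `V*` defined by `(Ψ_α β)(X) = ψ(π α, π β, X)`. -/
noncomputable def PsiEndo {k V : Type*} [Field k] [AddCommGroup V] [Module k V]
    (π : Module.Dual k V →ₗ[k] V) (ψ : V →ₗ[k] V →ₗ[k] V →ₗ[k] k)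
    (α : Module.Dual k V) : Module.Dual k V →ₗ[k] Module.Dual k V :=
  (ψ (π α)) ∘ₗ π

theorem LinearMap.apply_eq_zero_of_skew_of_forall_apply_eq_zero {R M : Type*} [CommRing R]
    [AddCommGroup M] [Module R M] [Module.Projective R M] {π : Module.Dual R M →ₗ[R] M}
    (hπ : ∀ α β : Module.Dual R M, α (π β) = -β (π α)) {δ : Module.Dual R M}
    (hδ : ∀ ε : Module.Dual R M, δ (π ε) = 0) : π δ = 0 :=
  (Module.forall_dual_apply_eq_zero_iff R _).mp fun ε => by rw [hπ, hδ, neg_zero]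

theorem LinearMap.apply_apply_apply_cycle {R M N : Type*} [CommSemiring R] [AddCommMonoid M]
    [Module R M] [AddCommGroup N] [Module R N] {ψ : M →ₗ[R] M →ₗ[R] M →ₗ[R] N}
    (h₁ : ∀ X Y : M, ψ X X Y = 0) (h₂ : ∀ X Y : M, ψ X Y Y = 0) (X Y Z : M) :
    ψ Z X Y = ψ X Y Z := by
  have alt₁₂ : ψ.IsAlt := fun X => LinearMap.ext (h₁ X)
  have alt₂₃ : (ψ X).IsAlt := h₂ X
  rw [← alt₁₂.neg X Z, LinearMap.neg_apply, alt₂₃.neg]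

theorem LinearMap.trace_eq_zero_of_comp_self_eq_zero {R M : Type*} [CommRing R] [IsReduced R]
    [AddCommGroup M] [Module R M] {f : M →ₗ[R] M} (hf : f ∘ₗ f = 0) : trace R M f = 0 :=
  (isNilpotent_trace_of_isNilpotent ⟨2, by rw [pow_two, Module.End.mul_eq_comp, hf]⟩).eq_zero

theorem LinearMap.trace_dual_eq_sum_coord {R M ι : Type*} [CommRing R] [AddCommGroup M]
    [Module R M] [Fintype ι] (b : Module.Basis ι R M) (f : Module.Dual R M →ₗ[R] Module.Dual R M) :
    trace R (Module.Dual R M) f = ∑ i, f (b.coord i) (b i) := by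
  classical
  rw [trace_eq_matrix_trace R b.dualBasis, Matrix.trace]
  refine Finset.sum_congr rfl fun i _ => ?_
  rw [Matrix.diag_apply, toMatrix_apply, Module.Basis.dualBasis_repr, Module.Basis.coe_dualBasis]

section PsiEndo

variable {k V : Type*} [Field k] [AddCommGroup V] [Module k V] {π : Module.Dual k V →ₗ[k] V}
  {ψ : V →ₗ[k] V →ₗ[k] V →ₗ[k] k}

theorem comp_PsiEndo_eq_zero (hπ : ∀ α β : Module.Dual k V, α (π β) = -β (π α))
    (h0 : ∀ α β γ : Module.Dual k V, ψ (π α) (π β) (π γ) = 0) (α : Module.Dual k V) :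
    π ∘ₗ PsiEndo π ψ α = 0 :=
  LinearMap.ext fun β => LinearMap.apply_eq_zero_of_skew_of_forall_apply_eq_zero hπ (h0 α β)

theorem PsiEndo_comp_self_eq_zero (hπ : ∀ α β : Module.Dual k V, α (π β) = -β (π α))
    (h0 : ∀ α β γ : Module.Dual k V, ψ (π α) (π β) (π γ) = 0) (α : Module.Dual k V) :
    PsiEndo π ψ α ∘ₗ PsiEndo π ψ α = 0 := by
  change (ψ (π α) ∘ₗ π) ∘ₗ PsiEndo π ψ α = 0
  rw [LinearMap.comp_assoc, comp_PsiEndo_eq_zero hπ h0, LinearMap.comp_zero]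

theorem xiForm_apply_eq_trace_PsiEndo {ι : Type*} [Fintype ι] (hψ₁ : ∀ X Y : V, ψ X X Y = 0)
    (hψ₂ : ∀ X Y : V, ψ X Y Y = 0) (b : Module.Basis ι k V) (α : Module.Dual k V) :
    xiForm π ψ b (π α) = LinearMap.trace k (Module.Dual k V) (PsiEndo π ψ α) := by
  rw [LinearMap.trace_dual_eq_sum_coord b, xiForm, LinearMap.sum_apply]
  exact Finset.sum_congr rfl fun i _ => (LinearMap.apply_apply_apply_cycle hψ₁ hψ₂ _ _ (π α)).symm

end PsiEndo

theorem Y_vanishes_of_triple_contraction_zero_general {k V : Type*} [Field k] [AddCommGroup V]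
    [Module k V]
    (π : Module.Dual k V →ₗ[k] V)
    (hπ : ∀ α β : Module.Dual k V, α (π β) = - β (π α))
    (ψ : V →ₗ[k] V →ₗ[k] V →ₗ[k] k)
    (hψ₁ : ∀ X Y : V, ψ X X Y = 0)
    (hψ₂ : ∀ X Y : V, ψ X Y Y = 0)
    (h0 : ∀ α β γ : Module.Dual k V, ψ (π α) (π β) (π γ) = 0) :
    (∀ α : Module.Dual k V, PsiEndo π ψ α ∘ₗ PsiEndo π ψ α = 0)
    ∧ (∀ α : Module.Dual k V,
        LinearMap.trace k (Module.Dual k V) (PsiEndo π ψ α) = 0)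
    ∧ (∀ (ι : Type) [Fintype ι], ∀ b : Module.Basis ι k V, π (xiForm π ψ b) = 0) := by
  have square_zero := PsiEndo_comp_self_eq_zero hπ h0
  have trace_zero α := LinearMap.trace_eq_zero_of_comp_self_eq_zero (square_zero α)
  refine ⟨square_zero, trace_zero, fun ι _ b => ?_⟩
  refine LinearMap.apply_eq_zero_of_skew_of_forall_apply_eq_zero hπ fun α => ?_
  rw [xiForm_apply_eq_trace_PsiEndo hψ₁ hψ₂, trace_zero]

/-- If `(∧³π♯)ψ = 0`, then each `Ψ_α` squares to zero, has trace zero, and the vector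
`π ξ` vanishes for any choice of basis. -/
theorem Y_vanishes_of_triple_contraction_zero {k V : Type*} [Field k] [AddCommGroup V]
    [Module k V] [FiniteDimensional k V]
    (π : Module.Dual k V →ₗ[k] V)
    (hπ : ∀ α β : Module.Dual k V, α (π β) = - β (π α))
    (ψ : V →ₗ[k] V →ₗ[k] V →ₗ[k] k)
    (hψ₁ : ∀ X Y : V, ψ X X Y = 0)
    (hψ₂ : ∀ X Y : V, ψ X Y Y = 0)
    (hψ₃ : ∀ X Y : V, ψ X Y X = 0)
    (h0 : ∀ α β γ : Module.Dual k V, ψ (π α) (π β) (π γ) = 0) :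
    (∀ α : Module.Dual k V, PsiEndo π ψ α ∘ₗ PsiEndo π ψ α = 0)
    ∧ (∀ α : Module.Dual k V,
        LinearMap.trace k (Module.Dual k V) (PsiEndo π ψ α) = 0)
    ∧ (∀ (ι : Type) [Fintype ι], ∀ b : Module.Basis ι k V, π (xiForm π ψ b) = 0) :=
  Y_vanishes_of_triple_contraction_zero_general π hπ ψ hψ₁ hψ₂ h0
end

section
/- Let R be a commutative ring, A a commutative R-algebra, and u an R-linear endomorphism of A. Then u is of order ≤ 2 if and only if for every a ∈ A the map b ↦ Φ²_u(a)(b) is a derivation of A, i.e., Φ²_u(a)(bc) = Φ²_u(a)(b)·c + b·Φ²_u(a)(c) for all b, c ∈ A. -/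
/-- The commutator of two linear endomorphisms. -/
def opComm {R A : Type*} [CommRing R] [CommRing A] [Algebra R A]
    (u v : A →ₗ[R] A) : A →ₗ[R] A := u ∘ₗ v - v ∘ₗ u

/-- `u` is of order `≤ 2` if `[[[u, ℓ_a], ℓ_b], ℓ_c] = 0` for all `a, b, c`. -/
def IsOrderLeTwo {R A : Type*} [CommRing R] [CommRing A] [Algebra R A]
    (u : A →ₗ[R] A) : Prop :=
  ∀ a b c : A, opComm (opComm (opComm u (LinearMap.mulLeft R a)) (LinearMap.mulLeft R b))
    (LinearMap.mulLeft R c) = 0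

/-- `Φ¹_u(a) = u(a) − u(1)·a`. -/
def Phi1 {R A : Type*} [CommRing R] [CommRing A] [Algebra R A]
    (u : A →ₗ[R] A) (a : A) : A := u a - u 1 * a

/-- `Φ²_u(a)(b) = Φ¹_u(ab) − Φ¹_u(a)·b − a·Φ¹_u(b)`. -/
def Phi2 {R A : Type*} [CommRing R] [CommRing A] [Algebra R A]
    (u : A →ₗ[R] A) (a b : A) : A := Phi1 u (a * b) - Phi1 u a * b - a * Phi1 u b

/-- The triple commutator applied to `x`, expressed via `Phi2`. -/
lemma opComm_triple_eq_phi2 {R A : Type*} [CommRing R] [CommRing A] [Algebra R A]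
    (u : A →ₗ[R] A) (a b c x : A) :
    opComm (opComm (opComm u (LinearMap.mulLeft R a)) (LinearMap.mulLeft R b))
      (LinearMap.mulLeft R c) x =
      (Phi2 u a (b * (c * x)) - Phi2 u a b * (c * x) - b * Phi2 u a (c * x))
        - c * (Phi2 u a (b * x) - Phi2 u a b * x - b * Phi2 u a x) := by
  simp only [opComm, Phi2, Phi1, LinearMap.sub_apply, LinearMap.comp_apply,
    LinearMap.mulLeft_apply]
  ring_nf

/-- `u` is of order `≤ 2` if and only if for every `a` the map `b ↦ Φ²_u(a)(b)` is a
derivation of `A`. -/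
theorem isOrderLeTwo_iff_phi2_derivation {R A : Type*} [CommRing R] [CommRing A] [Algebra R A]
    (u : A →ₗ[R] A) :
    IsOrderLeTwo u ↔
      ∀ a : A, ∀ b c : A, Phi2 u a (b * c) = Phi2 u a b * c + b * Phi2 u a c := by
  have phi2_one : ∀ a : A, Phi2 u a 1 = 0 := by
    intro a; simp [Phi2, Phi1]
  constructor
  · intro h a b c
    have h1 := congrArg (fun f : A →ₗ[R] A => f 1) (h a b c)
    simp only [LinearMap.zero_apply] at h1
    rw [opComm_triple_eq_phi2] at h1
    simp only [mul_one, phi2_one, mul_zero, sub_zero] at h1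
    linear_combination h1
  · intro h a b c
    ext x
    rw [LinearMap.zero_apply, opComm_triple_eq_phi2]
    have h1 := h a b (c * x)
    have h2 := h a b x
    rw [h1, h2]; ring
end
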